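/- arXiv:2505.05140 — 4 statements merged into one kernel-verified Lean document; each statement's English description precedes it below -/
import Mathlib

section
/- Let T > 0, let p, q : [0,T] → ℝ be continuous, and let u, v ∈ C¹([0,T]×[0,T]; ℂ²) both satisfy i ∂u/∂t + J ∂u/∂x + V(x) u = 0 on [0,T]×[0,T]. Assume u(x,0) = v(x,0) = 0 for all x ∈ [0,T] and u(T,t) = v(T,t) = 0 for all t ∈ [0,T]. Then ∫₀^T u(x,T) · conj(v(x,T)) dx = −i ∫₀^T [ u₂(0,η) conj(v₁(0,η)) − u₁(0,η) conj(v₂(0,η)) ] dη. -/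
open MeasureTheory Set

noncomputable section

/-- The matrix `J = [[0,1],[-1,0]]`. -/
def Jmat : Matrix (Fin 2) (Fin 2) ℂ := !![0, 1; -1, 0]

/-- The potential matrix `V(x) = [[p x, q x],[q x, -p x]]`. -/
def Vmat (p q : ℝ → ℝ) (x : ℝ) : Matrix (Fin 2) (Fin 2) ℂ :=
  !![(p x : ℂ), (q x : ℂ); (q x : ℂ), -(p x : ℂ)]

/-- The square `[0,T] × [0,T]`. -/
def Sq (T : ℝ) : Set (ℝ × ℝ) := Icc (0 : ℝ) T ×ˢ Icc (0 : ℝ) T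

/-- The Dirac equation `i ∂u/∂t + J ∂u/∂x + V u = 0` holding at every point of `D`,
partial derivatives being taken within `D`. -/
def DiracOn (p q : ℝ → ℝ) (D : Set (ℝ × ℝ)) (u : ℝ × ℝ → Fin 2 → ℂ) : Prop :=
  ∀ z ∈ D,
    Complex.I • (fderivWithin ℝ u D z ((0 : ℝ), (1 : ℝ)))
      + Jmat.mulVec (fderivWithin ℝ u D z ((1 : ℝ), (0 : ℝ)))
      + (Vmat p q z.1).mulVec (u z) = 0

/-!
With the density `ρ = u · v̄` and the flux `j = -i (J u) · v̄`, the Dirac equation yields the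
conservation law `∂ₜρ + ∂ₓj = 0` on the square. By the divergence theorem the boundary integral
of `(j, ρ)` vanishes; the data kill `ρ` on `t = 0` and `j` on `x = T`, so
`∫ ρ(x, T) dx = ∫ j(0, t) dt`.
-/

open Matrix Topology Interval ComplexConjugate

section Pairing

variable {E ι : Type*} [NormedAddCommGroup E] [NormedSpace ℝ E] [Fintype ι]
  {u v : E → ι → ℂ} {s : Set E} {z : E}

theorem HasFDerivWithinAt.mulVec_dotProduct_star (A : Matrix ι ι ℂ) {u' v' : E →L[ℝ] ι → ℂ}
    (hu : HasFDerivWithinAt u u' s z) (hv : HasFDerivWithinAt v v' s z) :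
    ∃ L : E →L[ℝ] ℂ, HasFDerivWithinAt (fun y => (A *ᵥ u y) ⬝ᵥ star (v y)) L s z ∧
      ∀ w, L w = (A *ᵥ u' w) ⬝ᵥ star (v z) + (A *ᵥ u z) ⬝ᵥ star (v' w) := by
  have hui := hasFDerivWithinAt_pi'.1 hu
  have hvi := hasFDerivWithinAt_pi'.1 hv
  refine ⟨_, HasFDerivWithinAt.fun_sum fun i _ =>
    (HasFDerivWithinAt.fun_sum fun j _ => (hui j).const_mul (A i j)).mul (hvi i).star, fun w => ?_⟩
  simp only [Pi.star_apply, RCLike.star_def, _root_.add_apply, _root_.sum_apply,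
    _root_.smul_apply, ContinuousLinearMap.comp_apply, ContinuousLinearMap.proj_apply,
    ContinuousLinearEquiv.coe_coe, starL'_apply, smul_eq_mul, dotProduct, mulVec,
    Finset.sum_add_distrib, Finset.sum_mul, Finset.mul_sum]
  rw [add_comm]
  congr 1
  exact Finset.sum_congr rfl fun i _ => Finset.sum_congr rfl fun j _ => by ring

theorem DifferentiableOn.mulVec_dotProduct_star (A : Matrix ι ι ℂ)
    (hu : DifferentiableOn ℝ u s) (hv : DifferentiableOn ℝ v s) :
    DifferentiableOn ℝ (fun y => (A *ᵥ u y) ⬝ᵥ star (v y)) s := fun z hz =>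
  have ⟨_, hL, _⟩ := (hu z hz).hasFDerivWithinAt.mulVec_dotProduct_star A (hv z hz).hasFDerivWithinAt
  hL.differentiableWithinAt

theorem fderivWithin_mulVec_dotProduct_star_apply (A : Matrix ι ι ℂ)
    (hs : UniqueDiffWithinAt ℝ s z) (hu : DifferentiableWithinAt ℝ u s z)
    (hv : DifferentiableWithinAt ℝ v s z) (w : E) :
    fderivWithin ℝ (fun y => (A *ᵥ u y) ⬝ᵥ star (v y)) s z w =
      (A *ᵥ fderivWithin ℝ u s z w) ⬝ᵥ star (v z) +
        (A *ᵥ u z) ⬝ᵥ star (fderivWithin ℝ v s z w) := by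
  obtain ⟨L, hL, hLw⟩ := hu.hasFDerivWithinAt.mulVec_dotProduct_star A hv.hasFDerivWithinAt
  rw [hL.fderivWithin hs, hLw]

end Pairing

theorem integral_rectangle_boundary_eq_zero {F : Type*} [NormedAddCommGroup F]
    [NormedSpace ℝ F] [CompleteSpace F] {ρ j : ℝ × ℝ → F} {a₁ b₁ a₂ b₂ : ℝ}
    (h₁ : a₁ ≤ b₁) (h₂ : a₂ ≤ b₂)
    (hρ : DifferentiableOn ℝ ρ (Icc a₁ b₁ ×ˢ Icc a₂ b₂))
    (hj : DifferentiableOn ℝ j (Icc a₁ b₁ ×ˢ Icc a₂ b₂))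
    (hlaw : ∀ z ∈ Icc a₁ b₁ ×ˢ Icc a₂ b₂,
      fderivWithin ℝ ρ (Icc a₁ b₁ ×ˢ Icc a₂ b₂) z (0, 1) +
        fderivWithin ℝ j (Icc a₁ b₁ ×ˢ Icc a₂ b₂) z (1, 0) = 0) :
    (∫ x in a₁..b₁, ρ (x, b₂)) - (∫ x in a₁..b₁, ρ (x, a₂)) +
      (∫ t in a₂..b₂, j (b₁, t)) - (∫ t in a₂..b₂, j (a₁, t)) = 0 := by
  set R := Icc a₁ b₁ ×ˢ Icc a₂ b₂
  have hR : [[a₁, b₁]] ×ˢ [[a₂, b₂]] = R := by rw [uIcc_of_le h₁, uIcc_of_le h₂]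
  have hnhds : ∀ z ∈ Ioo (min a₁ b₁) (max a₁ b₁) ×ˢ Ioo (min a₂ b₂) (max a₂ b₂), R ∈ 𝓝 z := by
    rintro ⟨x, t⟩ ⟨hx, ht⟩
    rw [min_eq_left h₁, max_eq_right h₁] at hx
    rw [min_eq_left h₂, max_eq_right h₂] at ht
    exact prod_mem_nhds (Icc_mem_nhds hx.1 hx.2) (Icc_mem_nhds ht.1 ht.2)
  have hmem : ∀ z ∈ Ioo (min a₁ b₁) (max a₁ b₁) ×ˢ Ioo (min a₂ b₂) (max a₂ b₂), z ∈ R :=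
    fun z hz => mem_of_mem_nhds (hnhds z hz)
  have hdiv := integral2_divergence_prod_of_hasFDerivAt j ρ
    (fderivWithin ℝ j R) (fderivWithin ℝ ρ R) a₁ a₂ b₁ b₂
    (hR ▸ hj.continuousOn) (hR ▸ hρ.continuousOn)
    (fun z hz => (hj z (hmem z hz)).hasFDerivWithinAt.hasFDerivAt (hnhds z hz))
    (fun z hz => (hρ z (hmem z hz)).hasFDerivWithinAt.hasFDerivAt (hnhds z hz))
    (by
      rw [hR]
      exact integrableOn_zero.congr_fun (fun z hz => by rw [add_comm, hlaw z hz])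
        (measurableSet_Icc.prod measurableSet_Icc))
  have hdiv_zero : ∀ x ∈ [[a₁, b₁]], ∀ t ∈ [[a₂, b₂]],
      fderivWithin ℝ j R (x, t) (1, 0) + fderivWithin ℝ ρ R (x, t) (0, 1) = 0 := by
    intro x hx t ht
    rw [add_comm]
    exact hlaw (x, t) (hR ▸ ⟨hx, ht⟩)
  rw [intervalIntegral.integral_congr (g := fun _ => 0) fun x hx =>
    (intervalIntegral.integral_congr (g := fun _ => 0) (hdiv_zero x hx)).trans
      intervalIntegral.integral_zero, intervalIntegral.integral_zero] at hdiv
  exact hdiv.symm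

theorem dirac_pairing_conservation (p q : ℝ → ℝ) (x : ℝ) {a aₜ aₓ b bₜ bₓ : Fin 2 → ℂ}
    (ha : Complex.I • aₜ + Jmat *ᵥ aₓ + Vmat p q x *ᵥ a = 0)
    (hb : Complex.I • bₜ + Jmat *ᵥ bₓ + Vmat p q x *ᵥ b = 0) :
    aₜ ⬝ᵥ star b + a ⬝ᵥ star bₜ +
      ((-(Complex.I • Jmat) *ᵥ aₓ) ⬝ᵥ star b + (-(Complex.I • Jmat) *ᵥ a) ⬝ᵥ star bₓ) = 0 := by
  -- Eliminate the time derivatives with the equations; the rest cancels since `V` is real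
  -- symmetric and `J` real antisymmetric.
  have ha₀ := congrFun ha 0
  have ha₁ := congrFun ha 1
  have hb₀ := congrArg (starRingEnd ℂ) (congrFun hb 0)
  have hb₁ := congrArg (starRingEnd ℂ) (congrFun hb 1)
  simp only [Jmat, Vmat, mulVec, dotProduct, Fin.sum_univ_two, cons_mulVec, empty_mulVec, add_cons,
    empty_add_empty, cons_val_zero, cons_val_one, cons_val_fin_one, cons_val', vecHead, vecTail,
    Function.comp_apply, Fin.succ_zero_eq_one, Pi.add_apply, Pi.zero_apply, Pi.smul_apply,
    smul_eq_mul, smul_of, smul_cons, Matrix.smul_empty, Matrix.neg_apply, of_apply, map_add,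
    map_mul, map_neg, map_zero, map_one, Complex.conj_I, Complex.conj_ofReal, Pi.star_apply,
    RCLike.star_def] at ha₀ ha₁ hb₀ hb₁ ⊢
  linear_combination (-Complex.I * conj (b 0)) * ha₀ + (-Complex.I * conj (b 1)) * ha₁
    + (Complex.I * a 0) * hb₀ + (Complex.I * a 1) * hb₁
    + (aₜ 0 * conj (b 0) + aₜ 1 * conj (b 1) + a 0 * conj (bₜ 0) + a 1 * conj (bₜ 1))
      * Complex.I_sq

theorem DiracOn.conservation_law {p q : ℝ → ℝ} {D : Set (ℝ × ℝ)} {u v : ℝ × ℝ → Fin 2 → ℂ}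
    (hD : UniqueDiffOn ℝ D) (hu : DifferentiableOn ℝ u D) (hv : DifferentiableOn ℝ v D)
    (hueq : DiracOn p q D u) (hveq : DiracOn p q D v) :
    ∀ z ∈ D, fderivWithin ℝ (fun y => u y ⬝ᵥ star (v y)) D z (0, 1) +
      fderivWithin ℝ (fun y => (-(Complex.I • Jmat) *ᵥ u y) ⬝ᵥ star (v y)) D z (1, 0) = 0 := by
  intro z hz
  have hρ := fderivWithin_mulVec_dotProduct_star_apply 1 (hD z hz) (hu z hz) (hv z hz) (0, 1)
  simp only [one_mulVec] at hρ
  rw [hρ, fderivWithin_mulVec_dotProduct_star_apply _ (hD z hz) (hu z hz) (hv z hz)]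
  exact dirac_pairing_conservation p q z.1 (hueq z hz) (hveq z hz)

theorem stmt5_general (T : ℝ) (hT : 0 < T) (p q : ℝ → ℝ)
    (u v : ℝ × ℝ → Fin 2 → ℂ)
    (hu : ContDiffOn ℝ 1 u (Sq T)) (hv : ContDiffOn ℝ 1 v (Sq T))
    (hueq : DiracOn p q (Sq T) u) (hveq : DiracOn p q (Sq T) v)
    (hu0 : ∀ x ∈ Icc (0 : ℝ) T, u (x, 0) = 0)
    (huT : ∀ t ∈ Icc (0 : ℝ) T, u (T, t) = 0) :
    (∫ x in (0 : ℝ)..T,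
        (u (x, T) 0 * (starRingEnd ℂ) (v (x, T) 0) +
          u (x, T) 1 * (starRingEnd ℂ) (v (x, T) 1)))
      = -Complex.I *
        ∫ η in (0 : ℝ)..T,
          (u (0, η) 1 * (starRingEnd ℂ) (v (0, η) 0) -
            u (0, η) 0 * (starRingEnd ℂ) (v (0, η) 1)) := by
  have hud := hu.differentiableOn one_ne_zero
  have hvd := hv.differentiableOn one_ne_zero
  have hρ : DifferentiableOn ℝ (fun y => u y ⬝ᵥ star (v y)) (Sq T) := by
    simpa only [one_mulVec] using hud.mulVec_dotProduct_star 1 hvd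
  have hbdry := integral_rectangle_boundary_eq_zero hT.le hT.le hρ
    (hud.mulVec_dotProduct_star _ hvd)
    (DiracOn.conservation_law ((uniqueDiffOn_Icc hT).prod (uniqueDiffOn_Icc hT)) hud hvd hueq hveq)
  have hbottom : ∫ x in (0 : ℝ)..T, u (x, 0) ⬝ᵥ star (v (x, 0)) = 0 := by
    refine (intervalIntegral.integral_congr fun x hx => ?_).trans intervalIntegral.integral_zero
    simp [hu0 x (uIcc_of_le hT.le ▸ hx)]
  have hright : ∫ t in (0 : ℝ)..T, (-(Complex.I • Jmat) *ᵥ u (T, t)) ⬝ᵥ star (v (T, t)) = 0 := by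
    refine (intervalIntegral.integral_congr fun t ht => ?_).trans intervalIntegral.integral_zero
    simp [huT t (uIcc_of_le hT.le ▸ ht)]
  rw [hbottom, hright, sub_zero, add_zero, sub_eq_zero] at hbdry
  convert hbdry using 1
  · simp [dotProduct, Fin.sum_univ_two]
  · rw [← intervalIntegral.integral_const_mul]
    congr 1
    funext t
    simp only [Jmat, mulVec, dotProduct, Fin.sum_univ_two, smul_of, smul_cons, smul_eq_mul,
      Matrix.smul_empty, Matrix.neg_apply, of_apply, cons_val', cons_val_fin_one, cons_val_zero,
      cons_val_one, Pi.star_apply, RCLike.star_def]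
    ring

/-- The Blagovestchenskii-type identity: the inner product of the
final states is expressed via the boundary traces. -/
theorem stmt5 (T : ℝ) (hT : 0 < T) (p q : ℝ → ℝ)
    (hp : ContinuousOn p (Icc 0 T)) (hq : ContinuousOn q (Icc 0 T))
    (u v : ℝ × ℝ → Fin 2 → ℂ)
    (hu : ContDiffOn ℝ 1 u (Sq T)) (hv : ContDiffOn ℝ 1 v (Sq T))
    (hueq : DiracOn p q (Sq T) u) (hveq : DiracOn p q (Sq T) v)
    (hu0 : ∀ x ∈ Icc (0 : ℝ) T, u (x, 0) = 0)
    (hv0 : ∀ x ∈ Icc (0 : ℝ) T, v (x, 0) = 0)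
    (huT : ∀ t ∈ Icc (0 : ℝ) T, u (T, t) = 0)
    (hvT : ∀ t ∈ Icc (0 : ℝ) T, v (T, t) = 0) :
    (∫ x in (0 : ℝ)..T,
        (u (x, T) 0 * (starRingEnd ℂ) (v (x, T) 0) +
          u (x, T) 1 * (starRingEnd ℂ) (v (x, T) 1)))
      = -Complex.I *
        ∫ η in (0 : ℝ)..T,
          (u (0, η) 1 * (starRingEnd ℂ) (v (0, η) 0) -
            u (0, η) 0 * (starRingEnd ℂ) (v (0, η) 1)) :=
  stmt5_general T hT p q u v hu hv hueq hveq hu0 huT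
end
end

section
/- Let T > 0, let p, q : [0,T] → ℝ be continuous, and let r : [0,T] → ℂ be continuous, extended by zero to negative arguments. Let f, g ∈ C¹([0,T]; ℂ) with f(0) = f′(0) = g(0) = g′(0) = 0, and let u, v ∈ C¹([0,T]×[0,T]; ℂ²) satisfy i ∂u/∂t + J ∂u/∂x + V(x) u = 0 on [0,T]×[0,T], u(x,t) = v(x,t) = 0 whenever t < x, u₁(0,t) = f(t), v₁(0,t) = g(t), and suppose the boundary traces have the convolution form u₂(0,t) = i f(t) + ∫₀^t r(t−s) f(s) ds and v₂(0,t) = i g(t) + ∫₀^t r(t−s) g(s) ds for t ∈ [0,T]. Then ∫₀^T u(x,T) · conj(v(x,T)) dx = 2 ∫₀^T f(t) conj(g(t)) dt − i ∫₀^T ∫₀^T [ r(t−s) − conj(r(s−t)) ] f(s) conj(g(t)) ds dt. -/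
open MeasureTheory Set

noncomputable section

/-!
For solutions of the Dirac system the density `u·v̄` and the flux `i (J u)·v̄` satisfy the
conservation law `∂ₜ(u·v̄) = ∂ₓ(i (J u)·v̄)`, because `J` is real antisymmetric and `V` real
symmetric. By the divergence theorem on `[0,T]²`, and since `u` vanishes on `t ≤ x`,
`∫ u(x,T)·v̄(x,T) dx = -∫ flux(0,t) dt`. On the boundary `x = 0` the response-function form of
`u₂` and `v₂` turns the flux into `-2 f ḡ + i ((r ∗ f) ḡ - f conj (r ∗ g))`, and Fubini on the
causal convolutions rewrites the last integral as the double integral with kernel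
`r(t-s) - conj r(s-t)`.
-/

open ComplexConjugate Complex Matrix

def diracDensity (a b : Fin 2 → ℂ) : ℂ := a 0 * conj (b 0) + a 1 * conj (b 1)

-- `i (J a) · conj b`
def diracFlux (a b : Fin 2 → ℂ) : ℂ := I * (a 1 * conj (b 0) - a 0 * conj (b 1))

theorem diracDensity_add_eq_diracFlux_add {p q : ℝ → ℝ} {x : ℝ}
    {a aₜ aₓ b bₜ bₓ : Fin 2 → ℂ}
    (ha : I • aₜ + Jmat *ᵥ aₓ + Vmat p q x *ᵥ a = 0)
    (hb : I • bₜ + Jmat *ᵥ bₓ + Vmat p q x *ᵥ b = 0) :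
    diracDensity aₜ b + diracDensity a bₜ = diracFlux aₓ b + diracFlux a bₓ := by
  have ha0 := congrFun ha 0
  have ha1 := congrFun ha 1
  have hb0 := congrArg conj (congrFun hb 0)
  have hb1 := congrArg conj (congrFun hb 1)
  simp only [Pi.add_apply, Pi.smul_apply, Pi.zero_apply, smul_eq_mul, Jmat, Vmat, mulVec,
    dotProduct, Fin.sum_univ_two, of_apply, cons_val', cons_val_zero, cons_val_one,
    empty_val', cons_val_fin_one, map_add, map_mul, map_neg, map_zero, map_one, conj_I, conj_ofReal]
    at ha0 ha1 hb0 hb1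
  simp only [diracDensity, diracFlux]
  linear_combination (-I * conj (b 0)) * ha0 + (-I * conj (b 1)) * ha1
    + (I * a 0) * hb0 + (I * a 1) * hb1
    + (aₜ 0 * conj (b 0) + a 0 * conj (bₜ 0) + aₜ 1 * conj (b 1) + a 1 * conj (bₜ 1)) * I_sq

theorem diracFlux_eq_of_apply_one_eq {a b : Fin 2 → ℂ} {F G : ℂ}
    (ha : a 1 = I * a 0 + F) (hb : b 1 = I * b 0 + G) :
    diracFlux a b = -2 * (a 0 * conj (b 0)) + I * (F * conj (b 0) - a 0 * conj G) := by
  simp only [diracFlux, ha, hb, map_add, map_mul, conj_I]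
  linear_combination (2 * (a 0 * conj (b 0))) * I_sq

theorem HasDerivWithinAt.apply_mul_conj_apply {a b : ℝ → Fin 2 → ℂ} {a' b' : Fin 2 → ℂ}
    {s : Set ℝ} {t : ℝ} (ha : HasDerivWithinAt a a' s t) (hb : HasDerivWithinAt b b' s t)
    (i j : Fin 2) :
    HasDerivWithinAt (fun τ => a τ i * conj (b τ j))
      (a' i * conj (b t j) + a t i * conj (b' j)) s t :=
  (hasDerivWithinAt_pi.1 ha i).fun_mul (hasDerivWithinAt_pi.1 hb j).star

theorem HasDerivWithinAt.diracDensity {a b : ℝ → Fin 2 → ℂ} {a' b' : Fin 2 → ℂ} {s : Set ℝ}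
    {t : ℝ} (ha : HasDerivWithinAt a a' s t) (hb : HasDerivWithinAt b b' s t) :
    HasDerivWithinAt (fun τ => diracDensity (a τ) (b τ))
      (diracDensity a' (b t) + diracDensity (a t) b') s t :=
  ((ha.apply_mul_conj_apply hb 0 0).add (ha.apply_mul_conj_apply hb 1 1)).congr_deriv
    (by simp only [_root_.diracDensity]; ring)

theorem HasDerivWithinAt.diracFlux {a b : ℝ → Fin 2 → ℂ} {a' b' : Fin 2 → ℂ} {s : Set ℝ}
    {t : ℝ} (ha : HasDerivWithinAt a a' s t) (hb : HasDerivWithinAt b b' s t) :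
    HasDerivWithinAt (fun τ => diracFlux (a τ) (b τ))
      (diracFlux a' (b t) + diracFlux (a t) b') s t :=
  (((ha.apply_mul_conj_apply hb 1 0).sub (ha.apply_mul_conj_apply hb 0 1)).const_mul
    I).congr_deriv (by simp only [_root_.diracFlux]; ring)

section Calculus

variable {E : Type*} [NormedAddCommGroup E] [NormedSpace ℝ E]

theorem DifferentiableOn.diracDensity {a b : E → Fin 2 → ℂ} {s : Set E}
    (ha : DifferentiableOn ℝ a s) (hb : DifferentiableOn ℝ b s) :
    DifferentiableOn ℝ (fun z => diracDensity (a z) (b z)) s := by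
  simp only [_root_.diracDensity]
  fun_prop

theorem DifferentiableOn.diracFlux {a b : E → Fin 2 → ℂ} {s : Set E}
    (ha : DifferentiableOn ℝ a s) (hb : DifferentiableOn ℝ b s) :
    DifferentiableOn ℝ (fun z => diracFlux (a z) (b z)) s := by
  simp only [_root_.diracFlux]
  fun_prop

theorem HasFDerivWithinAt.hasDerivWithinAt_prodMk_right {w : ℝ × ℝ → E}
    {L : ℝ × ℝ →L[ℝ] E} {s t : Set ℝ} {x y : ℝ} (hw : HasFDerivWithinAt w L (s ×ˢ t) (x, y))
    (hx : x ∈ s) : HasDerivWithinAt (fun τ => w (x, τ)) (L (0, 1)) t y :=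
  hw.comp_hasDerivWithinAt y ((hasDerivAt_const y x).prodMk (hasDerivAt_id y)).hasDerivWithinAt
    fun _ hτ => mk_mem_prod hx hτ

theorem HasFDerivWithinAt.hasDerivWithinAt_prodMk_left {w : ℝ × ℝ → E}
    {L : ℝ × ℝ →L[ℝ] E} {s t : Set ℝ} {x y : ℝ} (hw : HasFDerivWithinAt w L (s ×ˢ t) (x, y))
    (hy : y ∈ t) : HasDerivWithinAt (fun ξ => w (ξ, y)) (L (1, 0)) s x :=
  hw.comp_hasDerivWithinAt x ((hasDerivAt_id x).prodMk (hasDerivAt_const x y)).hasDerivWithinAt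
    fun _ hξ => mk_mem_prod hξ hy

theorem fderivWithin_prod_apply_zero_one {w : ℝ × ℝ → E} {s t : Set ℝ} {x y : ℝ} {c : E}
    (hw : DifferentiableWithinAt ℝ w (s ×ˢ t) (x, y)) (hx : x ∈ s)
    (ht : UniqueDiffWithinAt ℝ t y) (hc : HasDerivWithinAt (fun τ => w (x, τ)) c t y) :
    fderivWithin ℝ w (s ×ˢ t) (x, y) (0, 1) = c :=
  ht.eq_deriv _ (hw.hasFDerivWithinAt.hasDerivWithinAt_prodMk_right hx) hc

theorem fderivWithin_prod_apply_one_zero {w : ℝ × ℝ → E} {s t : Set ℝ} {x y : ℝ} {c : E}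
    (hw : DifferentiableWithinAt ℝ w (s ×ˢ t) (x, y)) (hy : y ∈ t)
    (hs : UniqueDiffWithinAt ℝ s x) (hc : HasDerivWithinAt (fun ξ => w (ξ, y)) c s x) :
    fderivWithin ℝ w (s ×ˢ t) (x, y) (1, 0) = c :=
  hs.eq_deriv _ (hw.hasFDerivWithinAt.hasDerivWithinAt_prodMk_left hy) hc

theorem integral_sub_eq_integral_sub_of_fderivWithin_eq [CompleteSpace E] {F G : ℝ × ℝ → E}
    {a₁ b₁ a₂ b₂ : ℝ} (h₁ : a₁ ≤ b₁) (h₂ : a₂ ≤ b₂)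
    (hF : DifferentiableOn ℝ F (Icc a₁ b₁ ×ˢ Icc a₂ b₂))
    (hG : DifferentiableOn ℝ G (Icc a₁ b₁ ×ˢ Icc a₂ b₂))
    (hFG : ∀ z ∈ Icc a₁ b₁ ×ˢ Icc a₂ b₂, fderivWithin ℝ F (Icc a₁ b₁ ×ˢ Icc a₂ b₂) z (0, 1) =
      fderivWithin ℝ G (Icc a₁ b₁ ×ˢ Icc a₂ b₂) z (1, 0)) :
    (∫ x in a₁..b₁, F (x, b₂)) - ∫ x in a₁..b₁, F (x, a₂) =
      (∫ t in a₂..b₂, G (b₁, t)) - ∫ t in a₂..b₂, G (a₁, t) := by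
  set R := Icc a₁ b₁ ×ˢ Icc a₂ b₂
  have hR : R = Icc (a₁, a₂) (b₁, b₂) := Icc_prod_Icc a₁ b₁ a₂ b₂
  have hderiv : ∀ {W : ℝ × ℝ → E}, DifferentiableOn ℝ W R →
      ∀ z ∈ Ioo a₁ b₁ ×ˢ Ioo a₂ b₂, HasFDerivAt W (fderivWithin ℝ W R z) z :=
    fun hW z hz => (hW z (prod_mono Ioo_subset_Icc_self Ioo_subset_Icc_self hz)).hasFDerivWithinAt
      |>.hasFDerivAt (prod_mem_nhds (Icc_mem_nhds hz.1.1 hz.1.2) (Icc_mem_nhds hz.2.1 hz.2.2))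
  have hdiv : EqOn (fun z => fderivWithin ℝ G R z (1, 0) + (-fderivWithin ℝ F R z) (0, 1)) 0 R :=
    fun z hz => by simp [hFG z hz]
  have h := integral_divergence_prod_Icc_of_hasFDerivAt_of_le G (-F) (fderivWithin ℝ G R)
    (fun z => -fderivWithin ℝ F R z) (a₁, a₂) (b₁, b₂) ⟨h₁, h₂⟩ (hR ▸ hG.continuousOn)
    (hR ▸ hF.neg.continuousOn) (hderiv hG) (fun z hz => (hderiv hF z hz).neg)
    (hR ▸ integrableOn_zero.congr_fun hdiv.symm (measurableSet_Icc.prod measurableSet_Icc))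
  rw [← hR, setIntegral_congr_fun (measurableSet_Icc.prod measurableSet_Icc) hdiv] at h
  simp only [Pi.neg_apply, intervalIntegral.integral_neg, Pi.zero_apply, integral_zero] at h
  linear_combination (norm := module) h

end Calculus

theorem Set.EqOn.Icc_of_Ioo {E : Type*} [TopologicalSpace E] [T2Space E] {φ ψ : ℝ → E}
    {a b : ℝ} (hab : a < b) (hφ : ContinuousOn φ (Icc a b)) (hψ : ContinuousOn ψ (Icc a b))
    (h : EqOn φ ψ (Ioo a b)) : EqOn φ ψ (Icc a b) :=
  h.of_subset_closure hφ hψ Ioo_subset_Icc_self (closure_Ioo hab.ne).ge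

section Dirac

variable {T : ℝ} {p q : ℝ → ℝ} {u v : ℝ × ℝ → Fin 2 → ℂ}

theorem DiracOn.fderivWithin_diracDensity_eq (hT : 0 < T) (hu : DifferentiableOn ℝ u (Sq T))
    (hv : DifferentiableOn ℝ v (Sq T)) (hueq : DiracOn p q (Sq T) u)
    (hveq : DiracOn p q (Sq T) v) {z : ℝ × ℝ} (hz : z ∈ Sq T) :
    fderivWithin ℝ (fun z => diracDensity (u z) (v z)) (Sq T) z (0, 1) =
      fderivWithin ℝ (fun z => diracFlux (u z) (v z)) (Sq T) z (1, 0) := by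
  unfold Sq at *
  obtain ⟨x, t⟩ := z
  obtain ⟨hx, ht⟩ := hz
  have hdu := (hu _ ⟨hx, ht⟩).hasFDerivWithinAt
  have hdv := (hv _ ⟨hx, ht⟩).hasFDerivWithinAt
  rw [fderivWithin_prod_apply_zero_one ((hu.diracDensity hv) _ ⟨hx, ht⟩) hx
      (uniqueDiffOn_Icc hT t ht) ((hdu.hasDerivWithinAt_prodMk_right hx).diracDensity
        (hdv.hasDerivWithinAt_prodMk_right hx)),
    fderivWithin_prod_apply_one_zero ((hu.diracFlux hv) _ ⟨hx, ht⟩) ht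
      (uniqueDiffOn_Icc hT x hx) ((hdu.hasDerivWithinAt_prodMk_left ht).diracFlux
        (hdv.hasDerivWithinAt_prodMk_left ht))]
  exact diracDensity_add_eq_diracFlux_add (hueq _ ⟨hx, ht⟩) (hveq _ ⟨hx, ht⟩)

theorem DiracOn.integral_diracDensity_eq (hT : 0 < T) (hu : DifferentiableOn ℝ u (Sq T))
    (hv : DifferentiableOn ℝ v (Sq T)) (hueq : DiracOn p q (Sq T) u)
    (hveq : DiracOn p q (Sq T) v) (hut : ∀ z ∈ Sq T, z.2 < z.1 → u z = 0) :
    ∫ x in (0 : ℝ)..T, diracDensity (u (x, T)) (v (x, T)) =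
      -∫ t in (0 : ℝ)..T, diracFlux (u (0, t)) (v (0, t)) := by
  have hcont := hu.continuousOn
  have hbottom : EqOn (fun x => u (x, 0)) 0 (Icc 0 T) :=
    EqOn.Icc_of_Ioo hT (hcont.comp (Continuous.prodMk_left 0).continuousOn
      fun x hx => ⟨hx, left_mem_Icc.2 hT.le⟩) continuousOn_const
      fun x hx => hut _ ⟨Ioo_subset_Icc_self hx, left_mem_Icc.2 hT.le⟩ hx.1
  have hright : EqOn (fun t => u (T, t)) 0 (Icc 0 T) :=
    EqOn.Icc_of_Ioo hT (hcont.comp (Continuous.prodMk_right T).continuousOn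
      fun t ht => ⟨right_mem_Icc.2 hT.le, ht⟩) continuousOn_const
      fun t ht => hut _ ⟨right_mem_Icc.2 hT.le, Ioo_subset_Icc_self ht⟩ ht.2
  have h := integral_sub_eq_integral_sub_of_fderivWithin_eq hT.le hT.le (hu.diracDensity hv)
    (hu.diracFlux hv) fun z hz => hueq.fderivWithin_diracDensity_eq hT hu hv hveq hz
  rw [intervalIntegral.integral_congr (f := fun x => diracDensity (u (x, 0)) (v (x, 0))) (g := 0)
      fun x hx => by simp [diracDensity, hbottom (uIcc_of_le hT.le ▸ hx)],
    intervalIntegral.integral_congr (f := fun t => diracFlux (u (T, t)) (v (T, t))) (g := 0)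
      fun t ht => by simp [diracFlux, hright (uIcc_of_le hT.le ▸ ht)]] at h
  simpa using h

end Dirac

section Causal

variable {r : ℝ → ℂ}

theorem setIntegral_Ioc_of_causal (hr0 : ∀ t < (0 : ℝ), r t = 0) (φ : ℝ → ℂ) {t T : ℝ}
    (ht₀ : 0 ≤ t) (htT : t ≤ T) :
    ∫ s in Ioc 0 T, r (t - s) * φ s = ∫ s in (0 : ℝ)..t, r (t - s) * φ s := by
  have hind : EqOn (fun s => r (t - s) * φ s) ((Ioc 0 t).indicator fun s => r (t - s) * φ s)
      (Ioc 0 T) := fun s hs => by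
    by_cases hst : s ≤ t
    · rw [indicator_of_mem (show s ∈ Ioc 0 t from ⟨hs.1, hst⟩)]
    · rw [indicator_of_notMem fun h => hst h.2]
      simp [hr0 (t - s) (by linarith)]
  rw [setIntegral_congr_fun measurableSet_Ioc hind, setIntegral_indicator measurableSet_Ioc,
    inter_eq_right.2 (Ioc_subset_Ioc_right htT), intervalIntegral.integral_of_le ht₀]

theorem integrable_prod_of_causal {T : ℝ} (hr : ContinuousOn r (Icc 0 T))
    (hr0 : ∀ t < (0 : ℝ), r t = 0) {φ : ℝ × ℝ → ℂ} (hφ : ContinuousOn φ (Icc 0 T ×ˢ Icc 0 T)) :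
    Integrable (fun z => r (z.1 - z.2) * φ z)
      ((volume.restrict (Ioc 0 T)).prod (volume.restrict (Ioc 0 T))) := by
  set S := Icc (0 : ℝ) T ×ˢ Icc (0 : ℝ) T
  have hlower : IntegrableOn (fun z => r (z.1 - z.2) * φ z) (S ∩ {z | z.2 ≤ z.1}) := by
    refine ContinuousOn.integrableOn_compact
      ((isCompact_Icc.prod isCompact_Icc).inter_right (isClosed_le continuous_snd continuous_fst))
      ((hr.comp (continuous_fst.sub continuous_snd).continuousOn ?_).mul
        (hφ.mono inter_subset_left))
    rintro ⟨x, y⟩ ⟨⟨hx, hy⟩, hyx⟩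
    exact ⟨sub_nonneg.2 hyx, show x - y ≤ T by linarith [hx.2, hy.1]⟩
  have hupper : IntegrableOn (fun z => r (z.1 - z.2) * φ z) (S ∩ {z | z.1 < z.2}) :=
    integrableOn_zero.congr_fun (fun z hz => by simp [hr0 _ (sub_neg.2 hz.2)])
      ((measurableSet_Icc.prod measurableSet_Icc).inter
        (measurableSet_lt measurable_fst measurable_snd))
  rw [Measure.prod_restrict, ← Measure.volume_eq_prod]
  refine (hlower.union hupper).mono_set fun z hz => ?_
  have hzS : z ∈ S := prod_mono Ioc_subset_Icc_self Ioc_subset_Icc_self hz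
  rcases le_or_gt z.2 z.1 with h | h
  exacts [Or.inl ⟨hzS, h⟩, Or.inr ⟨hzS, h⟩]

theorem integral_causalConv_mul_conj_sub {T : ℝ} (hT : 0 ≤ T) {f g : ℝ → ℂ}
    (hr : ContinuousOn r (Icc 0 T)) (hr0 : ∀ t < (0 : ℝ), r t = 0)
    (hf : ContinuousOn f (Icc 0 T)) (hg : ContinuousOn g (Icc 0 T)) :
    ∫ t in (0 : ℝ)..T, ((∫ s in (0 : ℝ)..t, r (t - s) * f s) * conj (g t)
        - f t * conj (∫ s in (0 : ℝ)..t, r (t - s) * g s)) =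
      ∫ t in (0 : ℝ)..T, ∫ s in (0 : ℝ)..T, (r (t - s) - conj (r (s - t))) * f s * conj (g t) := by
  have hfg : ContinuousOn (fun z : ℝ × ℝ => f z.2 * conj (g z.1)) (Icc 0 T ×ˢ Icc 0 T) :=
    (hf.comp continuousOn_snd fun _ hz => hz.2).mul
      (continuous_conj.comp_continuousOn (hg.comp continuousOn_fst fun _ hz => hz.1))
  have hK₁ := integrable_prod_of_causal hr hr0 hfg
  have hK₂ := integrable_prod_of_causal (continuous_conj.comp_continuousOn hr)
    (fun t ht => by simp [hr0 t ht]) (hfg.comp continuous_swap.continuousOn (mapsTo_swap_prod _ _))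
  simp only [Function.comp_def, Prod.fst_swap, Prod.snd_swap] at hK₂
  have hswap := integral_integral_swap (f := fun t s => conj (r (t - s)) * (f t * conj (g s))) hK₂
  have hsub := integral_integral_sub hK₁ hK₂.swap
  simp only [Function.comp_def, Prod.fst_swap, Prod.snd_swap, ← hswap] at hsub
  simp only [intervalIntegral.integral_of_le hT]
  calc _ = ∫ t in Ioc 0 T, ((∫ s in Ioc 0 T, r (t - s) * (f s * conj (g t)))
          - ∫ s in Ioc 0 T, conj (r (t - s)) * (f t * conj (g s))) := by
        refine setIntegral_congr_fun measurableSet_Ioc fun t ht => ?_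
        rw [← setIntegral_Ioc_of_causal hr0 f ht.1.le ht.2,
          ← setIntegral_Ioc_of_causal hr0 g ht.1.le ht.2, ← integral_conj, ← integral_mul_const,
          ← integral_const_mul]
        congr 1 <;> congr 1 <;> ext s
        · ring
        · rw [map_mul]; ring
    _ = _ := by
      rw [integral_sub hK₁.integral_prod_left hK₂.integral_prod_left, ← hsub]
      congr 1; ext t; congr 1; ext s; ring

end Causal

theorem stmt6_general (T : ℝ) (hT : 0 < T) (p q : ℝ → ℝ)
    (r : ℝ → ℂ) (hr : ContinuousOn r (Icc 0 T)) (hr0 : ∀ t < (0 : ℝ), r t = 0)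
    (f g : ℝ → ℂ)
    (hf : ContDiffOn ℝ 1 f (Icc 0 T))
    (hg : ContDiffOn ℝ 1 g (Icc 0 T))
    (u v : ℝ × ℝ → Fin 2 → ℂ)
    (hu : ContDiffOn ℝ 1 u (Sq T)) (hv : ContDiffOn ℝ 1 v (Sq T))
    (hueq : DiracOn p q (Sq T) u) (hveq : DiracOn p q (Sq T) v)
    (hut : ∀ z ∈ Sq T, z.2 < z.1 → u z = 0)
    (hub1 : ∀ t ∈ Icc (0 : ℝ) T, u (0, t) 0 = f t)
    (hvb1 : ∀ t ∈ Icc (0 : ℝ) T, v (0, t) 0 = g t)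
    (hub2 : ∀ t ∈ Icc (0 : ℝ) T,
      u (0, t) 1 = Complex.I * f t + ∫ s in (0 : ℝ)..t, r (t - s) * f s)
    (hvb2 : ∀ t ∈ Icc (0 : ℝ) T,
      v (0, t) 1 = Complex.I * g t + ∫ s in (0 : ℝ)..t, r (t - s) * g s) :
    (∫ x in (0 : ℝ)..T,
        (u (x, T) 0 * (starRingEnd ℂ) (v (x, T) 0) +
          u (x, T) 1 * (starRingEnd ℂ) (v (x, T) 1)))
      = 2 * (∫ t in (0 : ℝ)..T, f t * (starRingEnd ℂ) (g t))
        - Complex.I *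
          ∫ t in (0 : ℝ)..T, ∫ s in (0 : ℝ)..T,
            (r (t - s) - (starRingEnd ℂ) (r (s - t))) * f s * (starRingEnd ℂ) (g t) := by
  have hud := hu.differentiableOn one_ne_zero
  have hvd := hv.differentiableOn one_ne_zero
  have hfg : ContinuousOn (fun t => f t * conj (g t)) (Icc 0 T) :=
    hf.continuousOn.mul (continuous_conj.comp_continuousOn hg.continuousOn)
  have hΦ : ContinuousOn (fun t => diracFlux (u (0, t)) (v (0, t))) (Icc 0 T) :=
    (hud.diracFlux hvd).continuousOn.comp (Continuous.prodMk_right 0).continuousOn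
      fun t ht => ⟨left_mem_Icc.2 hT.le, ht⟩
  have hX : ∀ t ∈ uIcc 0 T, (∫ s in (0 : ℝ)..t, r (t - s) * f s) * conj (g t)
      - f t * conj (∫ s in (0 : ℝ)..t, r (t - s) * g s) =
        -I * (diracFlux (u (0, t)) (v (0, t)) + 2 * (f t * conj (g t))) := by
    intro t ht
    rw [uIcc_of_le hT.le] at ht
    rw [diracFlux_eq_of_apply_one_eq (by rw [hub1 t ht]; exact hub2 t ht)
      (by rw [hvb1 t ht]; exact hvb2 t ht), hub1 t ht, hvb1 t ht]
    linear_combination ((∫ s in (0 : ℝ)..t, r (t - s) * f s) * conj (g t)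
      - f t * conj (∫ s in (0 : ℝ)..t, r (t - s) * g s)) * I_sq
  change ∫ x in (0 : ℝ)..T, diracDensity (u (x, T)) (v (x, T)) = _
  rw [DiracOn.integral_diracDensity_eq hT hud hvd hueq hveq hut,
    ← integral_causalConv_mul_conj_sub hT.le hr hr0 hf.continuousOn hg.continuousOn,
    intervalIntegral.integral_congr hX, intervalIntegral.integral_const_mul,
    intervalIntegral.integral_add (hΦ.intervalIntegrable_of_Icc hT.le)
      ((hfg.intervalIntegrable_of_Icc hT.le).const_mul 2),
    intervalIntegral.integral_const_mul]
  linear_combination (-(∫ t in (0 : ℝ)..T, diracFlux (u (0, t)) (v (0, t)))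
    - 2 * ∫ t in (0 : ℝ)..T, f t * conj (g t)) * I_sq

/-- Representation of the connecting operator via the response
function: `(C^T f, g) = 2(f,g) - i ∬ [r(t-s) - conj r(s-t)] f(s) conj g(t)`. -/
theorem stmt6 (T : ℝ) (hT : 0 < T) (p q : ℝ → ℝ)
    (hp : ContinuousOn p (Icc 0 T)) (hq : ContinuousOn q (Icc 0 T))
    (r : ℝ → ℂ) (hr : ContinuousOn r (Icc 0 T)) (hr0 : ∀ t < (0 : ℝ), r t = 0)
    (f g : ℝ → ℂ)
    (hf : ContDiffOn ℝ 1 f (Icc 0 T)) (hf0 : f 0 = 0)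
    (hf'0 : derivWithin f (Icc 0 T) 0 = 0)
    (hg : ContDiffOn ℝ 1 g (Icc 0 T)) (hg0 : g 0 = 0)
    (hg'0 : derivWithin g (Icc 0 T) 0 = 0)
    (u v : ℝ × ℝ → Fin 2 → ℂ)
    (hu : ContDiffOn ℝ 1 u (Sq T)) (hv : ContDiffOn ℝ 1 v (Sq T))
    (hueq : DiracOn p q (Sq T) u) (hveq : DiracOn p q (Sq T) v)
    (hut : ∀ z ∈ Sq T, z.2 < z.1 → u z = 0)
    (hvt : ∀ z ∈ Sq T, z.2 < z.1 → v z = 0)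
    (hub1 : ∀ t ∈ Icc (0 : ℝ) T, u (0, t) 0 = f t)
    (hvb1 : ∀ t ∈ Icc (0 : ℝ) T, v (0, t) 0 = g t)
    (hub2 : ∀ t ∈ Icc (0 : ℝ) T,
      u (0, t) 1 = Complex.I * f t + ∫ s in (0 : ℝ)..t, r (t - s) * f s)
    (hvb2 : ∀ t ∈ Icc (0 : ℝ) T,
      v (0, t) 1 = Complex.I * g t + ∫ s in (0 : ℝ)..t, r (t - s) * g s) :
    (∫ x in (0 : ℝ)..T,
        (u (x, T) 0 * (starRingEnd ℂ) (v (x, T) 0) +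
          u (x, T) 1 * (starRingEnd ℂ) (v (x, T) 1)))
      = 2 * (∫ t in (0 : ℝ)..T, f t * (starRingEnd ℂ) (g t))
        - Complex.I *
          ∫ t in (0 : ℝ)..T, ∫ s in (0 : ℝ)..T,
            (r (t - s) - (starRingEnd ℂ) (r (s - t))) * f s * (starRingEnd ℂ) (g t) :=
  stmt6_general T hT p q r hr hr0 f g hf hg u v hu hv hueq hveq hut hub1 hvb1 hub2 hvb2
end
end

section
/- Let H be a complex Hilbert space, U ⊆ H a closed subspace with inclusion map e : U → H, and C : H → H a bounded linear bijection with bounded inverse such that there exists θ > 0 with ⟨C a, a⟩ real and ⟨C a, a⟩ ≥ θ‖a‖² for all a ∈ H. Then: (i) the compression e* C e : U → U is invertible with bounded inverse; (ii) the operator P := e (e* C e)⁻¹ e* C satisfies P² = P, the range of P equals U, and the kernel of P equals C⁻¹(U^⊥); (iii) C P = P* C; (iv) ⟨C P a, b⟩ = ⟨C a, P b⟩ for all a, b ∈ H, i.e., P is the orthogonal projection onto U with respect to the inner product (a,b) ↦ ⟨C a, b⟩. -/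
/-!
Since `⟪C a, a⟫` is real, `C` is self-adjoint, and the compression `K = e† C e` inherits the
coercivity bound `θ‖u‖² ≤ re ⟪K u, u⟫`. So `K` is bounded below, hence injective with closed
range, and a vector orthogonal to its range has `⟪K u, u⟫ = 0`, hence vanishes: `K` is bijective.
For `P = e K⁻¹ e† C` one has `P e = e`, which gives `P² = P` and `range P = U`, while
`P a = 0 ↔ e† C a = 0 ↔ C a ∈ U^⊥`. Finally `K⁻¹` is self-adjoint along with `K`, so
`P† C = C e K⁻¹ e† C = C P`.
-/

open ContinuousLinearMap RCLike
open scoped InnerProductSpace InnerProduct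

theorem IsSelfAdjoint.of_mul_eq_one {M : Type*} [Monoid M] [StarMul M] {a b : M}
    (ha : IsSelfAdjoint a) (hab : a * b = 1) : IsSelfAdjoint b :=
  left_inv_eq_right_inv (a := a) (by rw [← ha.star_eq, ← star_mul, hab, star_one]) hab

namespace ContinuousLinearMap

theorem isSelfAdjoint_of_im_inner_apply_self_eq_zero {H : Type*} [NormedAddCommGroup H]
    [InnerProductSpace ℂ H] [CompleteSpace H] {C : H →L[ℂ] H}
    (hC : ∀ a, (⟪C a, a⟫_ℂ).im = 0) : IsSelfAdjoint C :=
  isSelfAdjoint_iff_isSymmetric.2 <|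
    (LinearMap.isSymmetric_iff_inner_map_self_real _).2 fun a => Complex.conj_eq_iff_im.2 (hC a)

section Coercive

variable {𝕜 E : Type*} [RCLike 𝕜] [NormedAddCommGroup E] [InnerProductSpace 𝕜 E]
  {T : E →L[𝕜] E} {θ : ℝ}

theorem mul_norm_le_norm_apply_of_coercive (hT : ∀ u, θ * ‖u‖ ^ 2 ≤ re ⟪T u, u⟫_𝕜) (u : E) :
    θ * ‖u‖ ≤ ‖T u‖ := by
  rcases (norm_nonneg u).eq_or_lt with hu | hu
  · simp [← hu]
  refine le_of_mul_le_mul_right ?_ hu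
  calc θ * ‖u‖ * ‖u‖ = θ * ‖u‖ ^ 2 := by ring
    _ ≤ re ⟪T u, u⟫_𝕜 := hT u
    _ ≤ ‖T u‖ * ‖u‖ := re_inner_le_norm _ _

theorem antilipschitz_of_coercive (hθ : 0 < θ) (hT : ∀ u, θ * ‖u‖ ^ 2 ≤ re ⟪T u, u⟫_𝕜) :
    AntilipschitzWith θ.toNNReal⁻¹ T :=
  T.antilipschitz_of_bound fun u => by
    rw [NNReal.coe_inv, Real.coe_toNNReal _ hθ.le, ← div_eq_inv_mul, le_div_iff₀' hθ]
    exact mul_norm_le_norm_apply_of_coercive hT u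

theorem orthogonal_range_eq_bot_of_coercive (hθ : 0 < θ)
    (hT : ∀ u, θ * ‖u‖ ^ 2 ≤ re ⟪T u, u⟫_𝕜) : (LinearMap.range (T : E →ₗ[𝕜] E))ᗮ = ⊥ := by
  refine (Submodule.eq_bot_iff _).2 fun u hu => ?_
  have hinner : ⟪T u, u⟫_𝕜 = 0 := (Submodule.mem_orthogonal _ u).1 hu _ ⟨u, rfl⟩
  have hbound := hT u
  rw [hinner, map_zero] at hbound
  simpa using nonpos_of_mul_nonpos_right hbound hθ

theorem bijective_of_coercive [CompleteSpace E] (hθ : 0 < θ)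
    (hT : ∀ u, θ * ‖u‖ ^ 2 ≤ re ⟪T u, u⟫_𝕜) : Function.Bijective T := by
  have hanti := antilipschitz_of_coercive hθ hT
  refine ⟨hanti.injective, LinearMap.range_eq_top.1 ?_⟩
  have hclosed : IsClosed (LinearMap.range (T : E →ₗ[𝕜] E) : Set E) := by
    simpa only [LinearMap.coe_range, coe_coe] using hanti.isClosed_range T.uniformContinuous
  have := hclosed.completeSpace_coe
  exact Submodule.orthogonal_eq_bot_iff.1 (orthogonal_range_eq_bot_of_coercive hθ hT)

end Coercive

end ContinuousLinearMap

section ObliqueProjection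

variable {𝕜 H : Type*} [RCLike 𝕜] [NormedAddCommGroup H] [InnerProductSpace 𝕜 H]
  [CompleteSpace H] (U : Submodule 𝕜 H) [CompleteSpace U] (C : H →L[𝕜] H) (Kinv : U →L[𝕜] U)

noncomputable def compression : U →L[𝕜] U := U.subtypeL† ∘L C ∘L U.subtypeL

noncomputable def obliqueProjection : H →L[𝕜] H := U.subtypeL ∘L Kinv ∘L U.subtypeL† ∘L C

variable {U C Kinv}

theorem inner_compression_apply_self (u : U) : ⟪compression U C u, u⟫_𝕜 = ⟪C u, u⟫_𝕜 := by
  rw [compression, comp_apply, adjoint_inner_left]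
  rfl

theorem IsSelfAdjoint.compression (hC : IsSelfAdjoint C) : IsSelfAdjoint (compression U C) :=
  hC.adjoint_conj _

theorem obliqueProjection_comp_subtypeL (hl : Kinv ∘L compression U C = .id 𝕜 U) :
    obliqueProjection U C Kinv ∘L U.subtypeL = U.subtypeL :=
  calc _ = U.subtypeL ∘L (Kinv ∘L compression U C) := rfl
    _ = U.subtypeL := by rw [hl, comp_id]

theorem obliqueProjection_comp_self (hl : Kinv ∘L compression U C = .id 𝕜 U) :
    obliqueProjection U C Kinv ∘L obliqueProjection U C Kinv = obliqueProjection U C Kinv :=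
  calc _ = (obliqueProjection U C Kinv ∘L U.subtypeL) ∘L Kinv ∘L U.subtypeL† ∘L C := rfl
    _ = _ := by rw [obliqueProjection_comp_subtypeL hl]; rfl

theorem range_obliqueProjection (hl : Kinv ∘L compression U C = .id 𝕜 U) :
    LinearMap.range (obliqueProjection U C Kinv : H →ₗ[𝕜] H) = U := by
  refine le_antisymm ?_ fun x hx => ⟨x, congr($(obliqueProjection_comp_subtypeL hl) ⟨x, hx⟩)⟩
  rintro _ ⟨a, rfl⟩
  exact (Kinv _).2

theorem ker_obliqueProjection (hr : compression U C ∘L Kinv = .id 𝕜 U) :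
    LinearMap.ker (obliqueProjection U C Kinv : H →ₗ[𝕜] H) =
      Submodule.comap (C : H →ₗ[𝕜] H) Uᗮ := by
  have hinj : Function.Injective Kinv :=
    Function.LeftInverse.injective (g := compression U C) fun u => congr($hr u)
  ext a
  simp only [LinearMap.mem_ker, Submodule.mem_comap, coe_coe, obliqueProjection, comp_apply,
    Submodule.subtypeL_apply, ZeroMemClass.coe_eq_zero, map_eq_zero_iff Kinv hinj,
    U.adjoint_subtypeL, Submodule.orthogonalProjectionOnto_eq_zero_iff]

theorem comp_obliqueProjection (hC : IsSelfAdjoint C) (hKinv : IsSelfAdjoint Kinv) :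
    C ∘L obliqueProjection U C Kinv = (obliqueProjection U C Kinv)† ∘L C := by
  simp only [obliqueProjection, adjoint_comp, adjoint_adjoint, hC.adjoint_eq, hKinv.adjoint_eq,
    comp_assoc]

end ObliqueProjection

theorem stmt11_general {H : Type*} [NormedAddCommGroup H] [InnerProductSpace ℂ H]
    [CompleteSpace H] (U : Submodule ℂ H) [CompleteSpace U]
    (C : H →L[ℂ] H)
    (θ : ℝ) (hθ : 0 < θ)
    (hpos : ∀ a : H, (inner ℂ (C a) a : ℂ).im = 0 ∧
      θ * ‖a‖ ^ 2 ≤ (inner ℂ (C a) a : ℂ).re) :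
    Function.Bijective
      ((ContinuousLinearMap.adjoint U.subtypeL).comp (C.comp U.subtypeL)) ∧
    ∀ Kinv : U →L[ℂ] U,
      Kinv.comp ((ContinuousLinearMap.adjoint U.subtypeL).comp (C.comp U.subtypeL))
        = ContinuousLinearMap.id ℂ U →
      ((ContinuousLinearMap.adjoint U.subtypeL).comp (C.comp U.subtypeL)).comp Kinv
        = ContinuousLinearMap.id ℂ U →
      ∀ P : H →L[ℂ] H,
        P = U.subtypeL.comp (Kinv.comp ((ContinuousLinearMap.adjoint U.subtypeL).comp C)) →
        (P.comp P = P ∧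
         LinearMap.range (P : H →ₗ[ℂ] H) = U ∧
         LinearMap.ker (P : H →ₗ[ℂ] H) = Submodule.comap (C : H →ₗ[ℂ] H) Uᗮ ∧
         C.comp P = (ContinuousLinearMap.adjoint P).comp C ∧
         ∀ a b : H, (inner ℂ (C (P a)) b : ℂ) = inner ℂ (C a) (P b)) := by
  have hC : IsSelfAdjoint C := isSelfAdjoint_of_im_inner_apply_self_eq_zero fun a => (hpos a).1
  refine ⟨bijective_of_coercive (T := compression U C) hθ fun u => ?_,
    fun Kinv hl hr P hP => ?_⟩
  · rw [inner_compression_apply_self]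
    exact (hpos u).2
  have hKinv : IsSelfAdjoint Kinv := hC.compression.of_mul_eq_one hr
  have hCP : C ∘L P = P† ∘L C := hP ▸ comp_obliqueProjection hC hKinv
  refine ⟨hP ▸ obliqueProjection_comp_self hl, hP ▸ range_obliqueProjection hl,
    hP ▸ ker_obliqueProjection hr, hCP, fun a b => ?_⟩
  rw [← adjoint_inner_left, ← comp_apply, hCP, comp_apply]

/-- Lemma on oblique projectors: if `C` is a positive definite
isomorphism of a Hilbert space `H` and `U` a closed subspace with inclusion `e`,
then the compression `e* C e` is boundedly invertible, and
`P = e (e* C e)⁻¹ e* C` is the projection onto `U` parallel to `C⁻¹(U^⊥)`,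
satisfying `C P = P* C`; it is the orthogonal projection onto `U` in the inner
product `(a,b) ↦ ⟨C a, b⟩`. -/
theorem stmt11 {H : Type*} [NormedAddCommGroup H] [InnerProductSpace ℂ H]
    [CompleteSpace H] (U : Submodule ℂ H) [CompleteSpace U]
    (C : H →L[ℂ] H) (hbij : Function.Bijective C)
    (θ : ℝ) (hθ : 0 < θ)
    (hpos : ∀ a : H, (inner ℂ (C a) a : ℂ).im = 0 ∧
      θ * ‖a‖ ^ 2 ≤ (inner ℂ (C a) a : ℂ).re) :
    Function.Bijective
      ((ContinuousLinearMap.adjoint U.subtypeL).comp (C.comp U.subtypeL)) ∧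
    ∀ Kinv : U →L[ℂ] U,
      Kinv.comp ((ContinuousLinearMap.adjoint U.subtypeL).comp (C.comp U.subtypeL))
        = ContinuousLinearMap.id ℂ U →
      ((ContinuousLinearMap.adjoint U.subtypeL).comp (C.comp U.subtypeL)).comp Kinv
        = ContinuousLinearMap.id ℂ U →
      ∀ P : H →L[ℂ] H,
        P = U.subtypeL.comp (Kinv.comp ((ContinuousLinearMap.adjoint U.subtypeL).comp C)) →
        (P.comp P = P ∧
         LinearMap.range (P : H →ₗ[ℂ] H) = U ∧
         LinearMap.ker (P : H →ₗ[ℂ] H) = Submodule.comap (C : H →ₗ[ℂ] H) Uᗮ ∧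
         C.comp P = (ContinuousLinearMap.adjoint P).comp C ∧
         ∀ a b : H, (inner ℂ (C (P a)) b : ℂ) = inner ℂ (C a) (P b)) :=
  stmt11_general U C θ hθ hpos
end

section
/- Let T > 0 and n ≥ 1. For ξ ∈ (0,T) let P^ξ denote the operator on L²([0,T]; ℂⁿ) of multiplication by the indicator function of [0,ξ]. If D is a compact operator on L²([0,T]; ℂⁿ) such that D P^ξ = P^ξ D for every ξ ∈ (0,T), then D = 0. -/
open MeasureTheory Set

noncomputable section

/-- The measure `Lebesgue on [0,T]`. -/
def muT (T : ℝ) : Measure ℝ := volume.restrict (Icc (0 : ℝ) T)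

/-!
Suppose `D f ≠ 0`. Cut `[0, T]` into `N` intervals of length `T / N`. The squared norms of the
pieces of `f`, and of `D f`, on these intervals add up to `‖f‖ ^ 2` and `‖D f‖ ^ 2`, and `D` maps
each piece of `f` to the corresponding piece of `D f`. By pigeonhole some normalised piece `g`
of `f` has `‖D f‖ ≤ ‖D g‖ * ‖f‖`, while `D g` lives on a set of measure `T / N`. As `N → ∞`,
compactness makes a subsequence of these `D g` converge, and the limit vanishes because the
supports shrink: this contradicts the lower bound on `‖D g‖`.
-/

open Filter Topology ENNReal NNReal

lemma Finset.exists_ne_zero_and_mul_le_mul_of_sum_sq_eq {ι : Type*} (t : Finset ι)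
    {a b : ι → ℝ} {A B : ℝ} (hb : ∀ i ∈ t, 0 ≤ b i) (hA : 0 ≤ A)
    (hab : ∀ i ∈ t, a i = 0 → b i = 0)
    (ha_sum : ∑ i ∈ t, a i ^ 2 = A ^ 2) (hb_sum : ∑ i ∈ t, b i ^ 2 = B ^ 2) (hA0 : A ≠ 0) :
    ∃ i ∈ t, a i ≠ 0 ∧ B * a i ≤ b i * A := by
  set t' := t.filter fun i => a i ≠ 0
  have hsum {c : ι → ℝ} (hc : ∀ i ∈ t, a i = 0 → c i = 0) :
      ∑ i ∈ t', c i = ∑ i ∈ t, c i :=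
    Finset.sum_filter_of_ne fun i hi hci => fun hai => hci (hc i hi hai)
  have hne : t'.Nonempty := by
    refine Finset.nonempty_of_sum_ne_zero (f := fun i => a i ^ 2) ?_
    rw [hsum (fun i _ hi => by simp [hi]), ha_sum]
    positivity
  obtain ⟨i, hi, hle⟩ := Finset.exists_le_of_sum_le hne (f := fun i => (B * a i) ^ 2)
    (g := fun i => (b i * A) ^ 2) <| by
      simp only [mul_pow]
      rw [hsum (fun i _ hi => by simp [hi]), hsum (fun i hit hi => by simp [hab i hit hi]),
        ← Finset.mul_sum, ← Finset.sum_mul, ha_sum, hb_sum, mul_comm]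
  obtain ⟨hit, hai⟩ := Finset.mem_filter.1 hi
  refine ⟨i, hit, hai, (le_abs_self _).trans ?_⟩
  rw [← abs_of_nonneg (mul_nonneg (hb i hit) hA)]
  exact sq_le_sq.1 hle

section Lp

variable {α E : Type*} [MeasurableSpace α] [NormedAddCommGroup E] {μ : Measure α} {p : ℝ≥0∞}

lemma eLpNorm_two_sq_eq_lintegral (f : α → E) :
    eLpNorm f 2 μ ^ 2 = ∫⁻ a, ‖f a‖ₑ ^ 2 ∂μ := by
  simpa using eLpNorm_nnreal_pow_eq_lintegral (f := f) (μ := μ) (p := 2) two_ne_zero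

lemma Lp.norm_sq_eq_sum_norm_sq_of_ae_eq_indicator {ι : Type*} {t : Finset ι} {s : ι → Set α}
    (hs : ∀ i ∈ t, MeasurableSet (s i)) (hdisj : (t : Set ι).PairwiseDisjoint s)
    (hcover : ∀ᵐ a ∂μ, a ∈ ⋃ i ∈ t, s i) (x : Lp E 2 μ) {u : ι → Lp E 2 μ}
    (hu : ∀ i ∈ t, u i =ᵐ[μ] (s i).indicator x) :
    ‖x‖ ^ 2 = ∑ i ∈ t, ‖u i‖ ^ 2 := by
  have hpieces : eLpNorm x 2 μ ^ 2 = ∑ i ∈ t, eLpNorm (u i) 2 μ ^ 2 := by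
    calc eLpNorm x 2 μ ^ 2 = ∫⁻ a in ⋃ i ∈ t, s i, ‖x a‖ₑ ^ 2 ∂μ := by
          rw [Measure.restrict_eq_self_of_ae_mem hcover, eLpNorm_two_sq_eq_lintegral]
      _ = ∑ i ∈ t, ∫⁻ a in s i, ‖x a‖ₑ ^ 2 ∂μ := lintegral_biUnion_finset hdisj hs _
      _ = ∑ i ∈ t, eLpNorm (u i) 2 μ ^ 2 := Finset.sum_congr rfl fun i hi => by
          rw [eLpNorm_congr_ae (hu i hi), eLpNorm_indicator_eq_eLpNorm_restrict (hs i hi),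
            eLpNorm_two_sq_eq_lintegral]
  simp only [Lp.norm_def, ← ENNReal.toReal_pow, hpieces]
  exact ENNReal.toReal_sum fun i _ => pow_ne_top (Lp.eLpNorm_ne_top _)

lemma Lp.exists_norm_le_one_ae_eq_zero_compl_of_commute {𝕜 ι : Type*} [RCLike 𝕜]
    [NormedSpace 𝕜 E] (D : Lp E 2 μ →L[𝕜] Lp E 2 μ) {t : Finset ι} {s : ι → Set α}
    (hs : ∀ i ∈ t, MeasurableSet (s i)) (hdisj : (t : Set ι).PairwiseDisjoint s)
    (hcover : ∀ᵐ a ∂μ, a ∈ ⋃ i ∈ t, s i) (π : ι → Lp E 2 μ → Lp E 2 μ)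
    (hπ : ∀ i ∈ t, ∀ x, π i x =ᵐ[μ] (s i).indicator x)
    (hcomm : ∀ i ∈ t, ∀ x, D (π i x) = π i (D x)) {f : Lp E 2 μ} (hf : f ≠ 0) :
    ∃ i ∈ t, ∃ g : Lp E 2 μ, ‖g‖ ≤ 1 ∧ ‖D f‖ ≤ ‖D g‖ * ‖f‖ ∧ D g =ᵐ[μ.restrict (s i)ᶜ] 0 := by
  obtain ⟨i, hi, hπf, hle⟩ := t.exists_ne_zero_and_mul_le_mul_of_sum_sq_eq
    (a := fun i => ‖π i f‖) (b := fun i => ‖π i (D f)‖) (fun _ _ => norm_nonneg _)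
    (norm_nonneg f) (fun i hi h => by rw [← hcomm i hi, norm_eq_zero.1 h, map_zero, norm_zero])
    (Lp.norm_sq_eq_sum_norm_sq_of_ae_eq_indicator hs hdisj hcover f fun i hi => hπ i hi f).symm
    (Lp.norm_sq_eq_sum_norm_sq_of_ae_eq_indicator hs hdisj hcover (D f)
      fun i hi => hπ i hi (D f)).symm
    (norm_ne_zero_iff.2 hf)
  have hpos : 0 < ‖π i f‖ := lt_of_le_of_ne (norm_nonneg _) (Ne.symm hπf)
  set c : 𝕜 := ((‖π i f‖⁻¹ : ℝ) : 𝕜)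
  have hc : ‖c‖ = ‖π i f‖⁻¹ := by simp [c]
  refine ⟨i, hi, c • π i f, ?_, ?_, ?_⟩
  · rw [norm_smul, hc, inv_mul_cancel₀ hpos.ne']
  · rw [map_smul, hcomm i hi, norm_smul, hc, mul_assoc, le_inv_mul_iff₀ hpos]
    rwa [mul_comm]
  · rw [map_smul, hcomm i hi]
    filter_upwards [(Lp.coeFn_smul c (π i (D f))).restrict (s := (s i)ᶜ),
      (hπ i hi (D f)).restrict, ae_restrict_mem (hs i hi).compl] with a hsmul hind ha
    simp [hsmul, hind, indicator_of_notMem ha]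

lemma eLpNorm_le_eLpNorm_indicator_add_eLpNorm_sub {f g : α → E} {s : Set α} (hp : 1 ≤ p)
    (hs : MeasurableSet s) (hf : AEStronglyMeasurable f μ) (hg : g =ᵐ[μ.restrict sᶜ] 0) :
    eLpNorm f p μ ≤ eLpNorm (s.indicator f) p μ + eLpNorm (f - g) p μ := by
  have hcompl : sᶜ.indicator f =ᵐ[μ] sᶜ.indicator (f - g) :=
    (ae_eq_restrict_iff_indicator_ae_eq hs.compl).1 <| by
      filter_upwards [hg] with x hx
      simp [hx]
  calc eLpNorm f p μ = eLpNorm (s.indicator f + sᶜ.indicator f) p μ := by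
        rw [indicator_self_add_compl]
    _ ≤ eLpNorm (s.indicator f) p μ + eLpNorm (sᶜ.indicator f) p μ :=
        eLpNorm_add_le (hf.indicator hs) (hf.indicator hs.compl) hp
    _ = eLpNorm (s.indicator f) p μ + eLpNorm (sᶜ.indicator (f - g)) p μ := by
        rw [eLpNorm_congr_ae hcompl]
    _ ≤ eLpNorm (s.indicator f) p μ + eLpNorm (f - g) p μ := by
        gcongr
        exact eLpNorm_indicator_le _

lemma Lp.eq_zero_of_tendsto_of_ae_eq_zero_compl [Fact (1 ≤ p)] (hp : p ≠ ∞)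
    {u : ℕ → Lp E p μ} {y : Lp E p μ} (hu : Tendsto u atTop (𝓝 y))
    {s : ℕ → Set α} (hs : ∀ m, MeasurableSet (s m))
    (hμs : Tendsto (fun m => μ (s m)) atTop (𝓝 0)) (hsupp : ∀ m, u m =ᵐ[μ.restrict (s m)ᶜ] 0) :
    y = 0 := by
  have hdist : Tendsto (fun m => eLpNorm (⇑y - ⇑(u m)) p μ) atTop (𝓝 0) := by
    simpa only [eLpNorm_sub_comm] using (Lp.tendsto_Lp_iff_tendsto_eLpNorm' u y).1 hu
  suffices h : ∀ ε : ℝ≥0, 0 < ε → eLpNorm y p μ ≤ ε by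
    rw [← enorm_eq_zero, Lp.enorm_def, ← nonpos_iff_eq_zero]
    exact le_of_forall_pos_le_add fun ε hε _ => by simpa using h ε hε
  intro ε hε
  obtain ⟨δ, hδ, hsmall⟩ := (Lp.memLp y).eLpNorm_indicator_le Fact.out hp (NNReal.coe_pos.2 hε)
  have hev : ∀ᶠ m in atTop, eLpNorm y p μ ≤ ε + eLpNorm (⇑y - ⇑(u m)) p μ := by
    filter_upwards [hμs.eventually (ge_mem_nhds (ofReal_pos.2 hδ))] with m hm
    exact (eLpNorm_le_eLpNorm_indicator_add_eLpNorm_sub Fact.out (hs m)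
      (Lp.aestronglyMeasurable y) (hsupp m)).trans (by gcongr; simpa using hsmall _ (hs m) hm)
  simpa using ge_of_tendsto (tendsto_const_nhds.add hdist) hev

lemma IsCompactOperator.tendsto_zero_of_ae_eq_zero_compl {𝕜 X : Type*}
    [NontriviallyNormedField 𝕜] [NormedAddCommGroup X] [NormedSpace 𝕜 X] [NormedSpace 𝕜 E]
    [Fact (1 ≤ p)] (hp : p ≠ ∞) {D : X →L[𝕜] Lp E p μ} (hD : IsCompactOperator D)
    {g : ℕ → X} {r : ℝ} (hg : ∀ m, ‖g m‖ ≤ r) {s : ℕ → Set α} (hs : ∀ m, MeasurableSet (s m))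
    (hμs : Tendsto (fun m => μ (s m)) atTop (𝓝 0))
    (hsupp : ∀ m, D (g m) =ᵐ[μ.restrict (s m)ᶜ] 0) :
    Tendsto (fun m => D (g m)) atTop (𝓝 0) := by
  refine tendsto_of_subseq_tendsto fun ns hns => ?_
  obtain ⟨y, -, φ, hφ, hy⟩ := (hD.isCompact_closure_image_closedBall r).tendsto_subseq
    fun m => subset_closure (mem_image_of_mem D (mem_closedBall_zero_iff.2 (hg (ns m))))
  refine ⟨φ, ?_⟩
  rwa [Lp.eq_zero_of_tendsto_of_ae_eq_zero_compl hp hy (fun m => hs _)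
    (hμs.comp (hns.comp hφ.tendsto_atTop)) (fun m => hsupp _)] at hy

end Lp

lemma ae_mem_Ioc_muT (T : ℝ) : ∀ᵐ x ∂muT T, x ∈ Ioc 0 T := by
  have hne : ∀ᵐ x ∂muT T, x ≠ 0 := ae_restrict_of_ae (by simp [ae_iff])
  filter_upwards [ae_restrict_mem measurableSet_Icc, hne] with x hx hx0
  exact ⟨lt_of_le_of_ne hx.1 (Ne.symm hx0), hx.2⟩

-- `P ξ` is only given for `0 < ξ < T`; the cut-offs at `0` and at `T` are `0` and the identity.
def extendCutoff {X : Type*} [Zero X] (T : ℝ) (P : ℝ → X → X) (ξ : ℝ) : X → X :=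
  if ξ ≤ 0 then 0 else if T ≤ ξ then id else P ξ

lemma extendCutoff_commute {X : Type*} [Zero X] {T : ℝ} {P : ℝ → X → X} {D : X → X}
    (hD : D 0 = 0) (hcomm : ∀ ξ ∈ Ioo 0 T, ∀ x, D (P ξ x) = P ξ (D x)) (ξ : ℝ) (x : X) :
    D (extendCutoff T P ξ x) = extendCutoff T P ξ (D x) := by
  unfold extendCutoff
  split_ifs with h0 hT
  · exact hD
  · rfl
  · exact hcomm ξ ⟨lt_of_not_ge h0, lt_of_not_ge hT⟩ x

section extendCutoff

variable {E : Type*} [NormedAddCommGroup E] {p : ℝ≥0∞} {T : ℝ}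

lemma extendCutoff_ae_eq {P : ℝ → Lp E p (muT T) → Lp E p (muT T)}
    (hP : ∀ ξ ∈ Ioo 0 T, ∀ f : Lp E p (muT T), P ξ f =ᵐ[muT T] (Icc 0 ξ).indicator f)
    (ξ : ℝ) (f : Lp E p (muT T)) :
    ((extendCutoff T P ξ f : Lp E p (muT T)) : ℝ → E) =ᵐ[muT T] (Icc 0 ξ).indicator f := by
  unfold extendCutoff
  split_ifs with h0 hT
  · rw [Pi.zero_apply]
    filter_upwards [Lp.coeFn_zero E p (muT T), ae_mem_Ioc_muT T] with x hx hxT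
    rw [hx, indicator_of_notMem fun h => (h0.trans_lt hxT.1).not_ge h.2]
    rfl
  · filter_upwards [ae_mem_Ioc_muT T] with x hx
    rw [indicator_of_mem (show x ∈ Icc 0 ξ from ⟨hx.1.le, hx.2.trans hT⟩)]
    rfl
  · exact hP ξ ⟨lt_of_not_ge h0, lt_of_not_ge hT⟩ f

lemma extendCutoff_sub_ae_eq {P : ℝ → Lp E p (muT T) → Lp E p (muT T)}
    (hP : ∀ ξ ∈ Ioo 0 T, ∀ f : Lp E p (muT T), P ξ f =ᵐ[muT T] (Icc 0 ξ).indicator f)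
    {a b : ℝ} (ha : 0 ≤ a) (hab : a ≤ b) (f : Lp E p (muT T)) :
    (extendCutoff T P b f - extendCutoff T P a f : Lp E p (muT T))
      =ᵐ[muT T] (Ioc a b).indicator f := by
  have hsdiff : Ioc a b = Icc 0 b \ Icc 0 a := by
    ext x
    simp only [mem_Ioc, Set.mem_sdiff, mem_Icc]
    grind
  filter_upwards [Lp.coeFn_sub (extendCutoff T P b f) (extendCutoff T P a f),
    extendCutoff_ae_eq hP b f, extendCutoff_ae_eq hP a f] with x hsub hfb hfa
  rw [hsub, hsdiff, indicator_sdiff (Icc_subset_Icc_right hab), Pi.sub_apply, hfb, hfa,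
    Pi.sub_apply]

end extendCutoff

lemma exists_norm_le_one_ae_eq_zero_compl_of_commute_cutoff {𝕜 E : Type*} [RCLike 𝕜]
    [NormedAddCommGroup E] [NormedSpace 𝕜 E] {T : ℝ} (hT : 0 < T)
    {P : ℝ → Lp E 2 (muT T) → Lp E 2 (muT T)}
    (hP : ∀ ξ ∈ Ioo 0 T, ∀ f : Lp E 2 (muT T), P ξ f =ᵐ[muT T] (Icc 0 ξ).indicator f)
    (D : Lp E 2 (muT T) →L[𝕜] Lp E 2 (muT T))
    (hcomm : ∀ ξ ∈ Ioo 0 T, ∀ x, D (P ξ x) = P ξ (D x)) {f : Lp E 2 (muT T)} (hf : f ≠ 0)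
    {N : ℕ} (hN : N ≠ 0) :
    ∃ s : Set ℝ, MeasurableSet s ∧ muT T s ≤ ENNReal.ofReal (T / N) ∧ ∃ g : Lp E 2 (muT T),
      ‖g‖ ≤ 1 ∧ ‖D f‖ ≤ ‖D g‖ * ‖f‖ ∧ D g =ᵐ[(muT T).restrict sᶜ] 0 := by
  set t : ℕ → ℝ := fun k => k * (T / N)
  have ht : Monotone t := fun i j hij => by simp only [t]; gcongr
  have hcover : ∀ᵐ x ∂muT T, x ∈ ⋃ k ∈ Finset.range N, Ioc (t k) (t (k + 1)) := by
    filter_upwards [ae_mem_Ioc_muT T] with x hx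
    have htN : t N = T := mul_div_cancel₀ T (Nat.cast_ne_zero.2 hN)
    exact Ioc_subset_biUnion_Ioc N t (by simpa [htN, t] using hx)
  obtain ⟨k, -, g, hg, hDg, hsupp⟩ := Lp.exists_norm_le_one_ae_eq_zero_compl_of_commute D
    (fun _ _ => measurableSet_Ioc) ((ht.pairwise_disjoint_on_Ioc_succ).set_pairwise _) hcover
    (fun k x => extendCutoff T P (t (k + 1)) x - extendCutoff T P (t k) x)
    (fun k _ => extendCutoff_sub_ae_eq hP (by positivity) (ht k.le_succ))
    (fun k _ x => by simp only [map_sub, extendCutoff_commute (map_zero D) hcomm]) hf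
  refine ⟨_, measurableSet_Ioc, ?_, g, hg, hDg, hsupp⟩
  calc muT T (Ioc (t k) (t (k + 1))) ≤ volume (Ioc (t k) (t (k + 1))) :=
        Measure.restrict_apply_le _ _
    _ = ENNReal.ofReal (T / N) := by simp only [Real.volume_Ioc, t]; push_cast; ring_nf

theorem stmt14_general (T : ℝ) (hT : 0 < T) (n : ℕ)
    (P : ℝ → (Lp (Fin n → ℂ) 2 (muT T) →L[ℂ] Lp (Fin n → ℂ) 2 (muT T)))
    (hP : ∀ ξ ∈ Ioo (0 : ℝ) T, ∀ f : Lp (Fin n → ℂ) 2 (muT T),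
      (P ξ f : ℝ → Fin n → ℂ) =ᵐ[muT T] (Icc (0 : ℝ) ξ).indicator f)
    (D : Lp (Fin n → ℂ) 2 (muT T) →L[ℂ] Lp (Fin n → ℂ) 2 (muT T))
    (hD : IsCompactOperator D)
    (hcomm : ∀ ξ ∈ Ioo (0 : ℝ) T, D.comp (P ξ) = (P ξ).comp D) :
    D = 0 := by
  ext1 f
  by_contra hDf
  have hf : f ≠ 0 := by rintro rfl; exact hDf (map_zero D)
  choose s hs hμs g hg hDg hsupp using fun N : ℕ =>
    exists_norm_le_one_ae_eq_zero_compl_of_commute_cutoff hT (P := fun ξ => P ξ) hP D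
      (fun ξ hξ => DFunLike.congr_fun (hcomm ξ hξ)) hf N.succ_ne_zero
  have hμ : Tendsto (fun N => muT T (s N)) atTop (𝓝 0) := by
    refine tendsto_of_tendsto_of_tendsto_of_le_of_le tendsto_const_nhds ?_ (fun _ => zero_le) hμs
    simpa using ENNReal.tendsto_ofReal
      ((tendsto_const_div_atTop_nhds_zero_nat T).comp (tendsto_add_atTop_nat 1))
  have hDg0 := hD.tendsto_zero_of_ae_eq_zero_compl ofNat_ne_top hg hs hμ hsupp
  have hle := ge_of_tendsto' (hDg0.norm.mul_const ‖f‖) hDg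
  rw [norm_zero, zero_mul] at hle
  exact hDf (norm_le_zero_iff.1 hle)

/-- A compact operator on `L²([0,T];ℂⁿ)` commuting with all the
cut-off projectors `P^ξ` (multiplication by the indicator of `[0,ξ]`) vanishes. -/
theorem stmt14 (T : ℝ) (hT : 0 < T) (n : ℕ) (hn : 1 ≤ n)
    (P : ℝ → (Lp (Fin n → ℂ) 2 (muT T) →L[ℂ] Lp (Fin n → ℂ) 2 (muT T)))
    (hP : ∀ ξ ∈ Ioo (0 : ℝ) T, ∀ f : Lp (Fin n → ℂ) 2 (muT T),
      (P ξ f : ℝ → Fin n → ℂ) =ᵐ[muT T] (Icc (0 : ℝ) ξ).indicator f)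
    (D : Lp (Fin n → ℂ) 2 (muT T) →L[ℂ] Lp (Fin n → ℂ) 2 (muT T))
    (hD : IsCompactOperator D)
    (hcomm : ∀ ξ ∈ Ioo (0 : ℝ) T, D.comp (P ξ) = (P ξ).comp D) :
    D = 0 :=
  stmt14_general T hT n P hP D hD hcomm
end
end
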